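/- arXiv:1802.09989 — 4 statements merged into one kernel-verified Lean document; each statement's English description precedes it below -/
import Mathlib

section
/- Let (F,L) be a pair of a precovering class F and a preenveloping class L in an abelian category C. Suppose that for each object M in C there is a left exact sequence 0 -> K -> F -> M -> 0 with F in F and a right exact sequence 0 -> M -> L -> C' -> 0 with L in L, both of which are Hom(F,-)-acyclic and Hom(-,L)-acyclic. Then (F,L) is a balanced pair. -/
open CategoryTheory Limits

namespace Paper

universe w v u

variable {C : Type u} [Category.{v} C] [Abelian C]

section ExtDefs
variable [HasExt.{w} C]

/-- The right `Ext^1`-orthogonal class. -/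
def rightPerp1 (F : Set C) : Set C :=
  {B | ∀ A ∈ F, Subsingleton (Abelian.Ext A B 1)}

/-- The left `Ext^1`-orthogonal class. -/
def leftPerp1 (L : Set C) : Set C :=
  {A | ∀ B ∈ L, Subsingleton (Abelian.Ext A B 1)}

/-- The right `Ext^{>0}`-orthogonal class. -/
def rightPerp (F : Set C) : Set C :=
  {B | ∀ A ∈ F, ∀ n : ℕ, 0 < n → Subsingleton (Abelian.Ext A B n)}

/-- The left `Ext^{>0}`-orthogonal class. -/
def leftPerp (L : Set C) : Set C :=
  {A | ∀ B ∈ L, ∀ n : ℕ, 0 < n → Subsingleton (Abelian.Ext A B n)}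

/-- `(Y, X)` is a cotorsion pair: each class is the `Ext^1`-orthogonal of the other. -/
structure IsCotorsionPair (Y X : Set C) : Prop where
  mem_left_iff : ∀ A : C, A ∈ Y ↔ ∀ B ∈ X, Subsingleton (Abelian.Ext A B 1)
  mem_right_iff : ∀ B : C, B ∈ X ↔ ∀ A ∈ Y, Subsingleton (Abelian.Ext A B 1)

/-- Hereditary: `Ext^i(Y, X) = 0` for all `i > 0`. -/
def Hereditary (Y X : Set C) : Prop :=
  ∀ A ∈ Y, ∀ B ∈ X, ∀ n : ℕ, 0 < n → Subsingleton (Abelian.Ext A B n)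

end ExtDefs

/-- There exists a short exact sequence `0 ⟶ A ⟶ B ⟶ X ⟶ 0`. -/
def SES (A B X : C) : Prop :=
  ∃ (f : A ⟶ B) (g : B ⟶ X) (w : f ≫ g = 0), (ShortComplex.mk f g w).ShortExact

/-- Completeness of a pair of classes: every object admits the two approximation
short exact sequences. -/
def Complete (Y X : Set C) : Prop :=
  ∀ M : C, (∃ B ∈ X, ∃ A ∈ Y, SES B A M) ∧ (∃ B ∈ X, ∃ A ∈ Y, SES M B A)

/-- A class is resolving if it contains the projectives and is closed under
extensions and under kernels of epimorphisms between its objects. -/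
def Resolving (Y : Set C) : Prop :=
  (∀ P : C, Projective P → P ∈ Y) ∧
  (∀ A E B : C, SES A E B → A ∈ Y → B ∈ Y → E ∈ Y) ∧
  (∀ A E B : C, SES A E B → E ∈ Y → B ∈ Y → A ∈ Y)

/-- A class is coresolving if it contains the injectives and is closed under
extensions and under cokernels of monomorphisms between its objects. -/
def Coresolving (X : Set C) : Prop :=
  (∀ I : C, Injective I → I ∈ X) ∧
  (∀ A E B : C, SES A E B → A ∈ X → B ∈ X → E ∈ X) ∧
  (∀ A E B : C, SES A E B → A ∈ X → E ∈ X → B ∈ X)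

/-- `φ : F₀ ⟶ M` is an `F`-precover of `M`. -/
def IsPrecover (F : Set C) {F₀ M : C} (φ : F₀ ⟶ M) : Prop :=
  F₀ ∈ F ∧ ∀ F' ∈ F, ∀ g : F' ⟶ M, ∃ h : F' ⟶ F₀, h ≫ φ = g

/-- `ψ : M ⟶ L₀` is an `L`-preenvelope of `M`. -/
def IsPreenvelope (L : Set C) {M L₀ : C} (ψ : M ⟶ L₀) : Prop :=
  L₀ ∈ L ∧ ∀ L' ∈ L, ∀ g : M ⟶ L', ∃ h : L₀ ⟶ L', ψ ≫ h = g

/-- `F` is a precovering class. -/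
def Precovering (F : Set C) : Prop :=
  ∀ M : C, ∃ (F₀ : C) (φ : F₀ ⟶ M), IsPrecover F φ

/-- `L` is a preenveloping class. -/
def Preenveloping (L : Set C) : Prop :=
  ∀ M : C, ∃ (L₀ : C) (ψ : M ⟶ L₀), IsPreenvelope L ψ

/-- `F` is special precovering: every object has an epic `F`-precover with
kernel in `F^{⊥₁}`. -/
def SpecialPrecovering [HasExt.{w} C] (F : Set C) : Prop :=
  ∀ M : C, ∃ (F₀ : C) (φ : F₀ ⟶ M), IsPrecover F φ ∧ Epi φ ∧
    kernel φ ∈ rightPerp1.{w} F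

/-- `L` is special preenveloping: every object has a monic `L`-preenvelope with
cokernel in `^{⊥₁}L`. -/
def SpecialPreenveloping [HasExt.{w} C] (L : Set C) : Prop :=
  ∀ M : C, ∃ (L₀ : C) (ψ : M ⟶ L₀), IsPreenvelope L ψ ∧ Mono ψ ∧
    cokernel ψ ∈ leftPerp1.{w} L

/-- The class of direct summands of objects of `F`. -/
def Smd (F : Set C) : Set C :=
  {A | ∃ B ∈ F, ∃ (i : A ⟶ B) (r : B ⟶ A), i ≫ r = 𝟙 A}

/-- Data of a (not necessarily exact) resolution `⋯ ⟶ F₁ ⟶ F₀ ⟶ M ⟶ 0`. -/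
structure Resolution (M : C) where
  obj : ℕ → C
  d : ∀ n : ℕ, obj (n + 1) ⟶ obj n
  ε : obj 0 ⟶ M
  d_comp_d : ∀ n : ℕ, d (n + 1) ≫ d n = 0
  d_comp_ε : d 0 ≫ ε = 0

namespace Resolution

variable {M : C} (R : Resolution M)

/-- All objects of the resolution lie in `S`. -/
def ObjsIn (S : Set C) : Prop := ∀ n : ℕ, R.obj n ∈ S

/-- The resolution becomes exact after applying `Hom(X, -)`. -/
def HomLeftAcyclic (X : C) : Prop :=
  (∀ g : X ⟶ M, ∃ h : X ⟶ R.obj 0, h ≫ R.ε = g) ∧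
  (∀ h : X ⟶ R.obj 0, h ≫ R.ε = 0 → ∃ k : X ⟶ R.obj 1, k ≫ R.d 0 = h) ∧
  (∀ (n : ℕ) (h : X ⟶ R.obj (n + 1)), h ≫ R.d n = 0 →
    ∃ k : X ⟶ R.obj (n + 2), k ≫ R.d (n + 1) = h)

/-- The resolution becomes exact after applying `Hom(-, L')`. -/
def HomRightAcyclic (L' : C) : Prop :=
  (∀ g : M ⟶ L', R.ε ≫ g = 0 → g = 0) ∧
  (∀ g : R.obj 0 ⟶ L', R.d 0 ≫ g = 0 → ∃ k : M ⟶ L', R.ε ≫ k = g) ∧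
  (∀ (n : ℕ) (g : R.obj (n + 1) ⟶ L'), R.d (n + 1) ≫ g = 0 →
    ∃ k : R.obj n ⟶ L', R.d n ≫ k = g)

end Resolution

/-- Data of a (not necessarily exact) coresolution `0 ⟶ M ⟶ L⁰ ⟶ L¹ ⟶ ⋯`. -/
structure Coresolution (M : C) where
  obj : ℕ → C
  d : ∀ n : ℕ, obj n ⟶ obj (n + 1)
  η : M ⟶ obj 0
  d_comp_d : ∀ n : ℕ, d n ≫ d (n + 1) = 0
  η_comp_d : η ≫ d 0 = 0

namespace Coresolution

variable {M : C} (R : Coresolution M)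

/-- All objects of the coresolution lie in `S`. -/
def ObjsIn (S : Set C) : Prop := ∀ n : ℕ, R.obj n ∈ S

/-- The coresolution becomes exact after applying `Hom(X, -)`. -/
def HomLeftAcyclic (X : C) : Prop :=
  (∀ g : X ⟶ M, g ≫ R.η = 0 → g = 0) ∧
  (∀ g : X ⟶ R.obj 0, g ≫ R.d 0 = 0 → ∃ k : X ⟶ M, k ≫ R.η = g) ∧
  (∀ (n : ℕ) (g : X ⟶ R.obj (n + 1)), g ≫ R.d (n + 1) = 0 →
    ∃ k : X ⟶ R.obj n, k ≫ R.d n = g)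

/-- The coresolution becomes exact after applying `Hom(-, L')`. -/
def HomRightAcyclic (L' : C) : Prop :=
  (∀ g : M ⟶ L', ∃ h : R.obj 0 ⟶ L', R.η ≫ h = g) ∧
  (∀ h : R.obj 0 ⟶ L', R.η ≫ h = 0 → ∃ k : R.obj 1 ⟶ L', R.d 0 ≫ k = h) ∧
  (∀ (n : ℕ) (h : R.obj (n + 1) ⟶ L'), R.d n ≫ h = 0 →
    ∃ k : R.obj (n + 2) ⟶ L', R.d (n + 1) ≫ k = h)

end Coresolution

/-- `(F, L)` is a balanced pair: `F` is precovering, `L` is preenveloping, every object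
has a `Hom(-, L)`-acyclic `F`-resolution and a `Hom(F, -)`-acyclic `L`-coresolution. -/
def BalancedPair (F L : Set C) : Prop :=
  Precovering F ∧ Preenveloping L ∧
  (∀ M : C, ∃ R : Resolution M, R.ObjsIn F ∧
    (∀ X ∈ F, R.HomLeftAcyclic X) ∧ (∀ Y ∈ L, R.HomRightAcyclic Y)) ∧
  (∀ M : C, ∃ R : Coresolution M, R.ObjsIn L ∧
    (∀ X ∈ F, R.HomLeftAcyclic X) ∧ (∀ Y ∈ L, R.HomRightAcyclic Y))

/-- Admissible: every `F`-precover is epic and every `L`-preenvelope is monic. -/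
def Admissible (F L : Set C) : Prop :=
  (∀ (F₀ M : C) (φ : F₀ ⟶ M), IsPrecover F φ → Epi φ) ∧
  (∀ (M L₀ : C) (ψ : M ⟶ L₀), IsPreenvelope L ψ → Mono ψ)

/-- A three-term sequence `A ⟶ B ⟶ M` becomes exact (as `0 → Hom(X,A) → Hom(X,B) → Hom(X,M) → 0`)
after applying `Hom(X, -)`. -/
def HomLeftAcyclicSeq (X : C) {A B M : C} (f : A ⟶ B) (g : B ⟶ M) : Prop :=
  (∀ h : X ⟶ A, h ≫ f = 0 → h = 0) ∧
  (∀ h : X ⟶ B, h ≫ g = 0 → ∃ k : X ⟶ A, k ≫ f = h) ∧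
  (∀ u : X ⟶ M, ∃ h : X ⟶ B, h ≫ g = u)

/-- A three-term sequence `A ⟶ B ⟶ M` becomes exact (as `0 → Hom(M,L') → Hom(B,L') → Hom(A,L') → 0`)
after applying `Hom(-, L')`. -/
def HomRightAcyclicSeq (L' : C) {A B M : C} (f : A ⟶ B) (g : B ⟶ M) : Prop :=
  (∀ u : M ⟶ L', g ≫ u = 0 → u = 0) ∧
  (∀ v : B ⟶ L', f ≫ v = 0 → ∃ u : M ⟶ L', g ≫ u = v) ∧
  (∀ t : A ⟶ L', ∃ v : B ⟶ L', f ≫ v = t)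

/-- If `F` is precovering, `L` is preenveloping, and every object `M` admits a left exact
sequence `0 → K → F₀ → M → 0` (with `F₀ ∈ F`) and a right exact sequence
`0 → M → L₀ → C' → 0` (with `L₀ ∈ L`) which are both `Hom(F,-)`- and `Hom(-,L)`-acyclic,
then `(F, L)` is a balanced pair. -/
theorem balancedPair_of_acyclic_sequences
    {C : Type u} [Category.{v} C] [Abelian C]
    (F L : Set C) (hF : Precovering F) (hL : Preenveloping L)
    (h1 : ∀ M : C, ∃ (K F₀ : C) (_ : F₀ ∈ F) (f : K ⟶ F₀) (g : F₀ ⟶ M)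
      (wfg : f ≫ g = 0), Mono f ∧ (ShortComplex.mk f g wfg).Exact ∧
      (∀ X ∈ F, HomLeftAcyclicSeq X f g) ∧ (∀ Y ∈ L, HomRightAcyclicSeq Y f g))
    (h2 : ∀ M : C, ∃ (L₀ C' : C) (_ : L₀ ∈ L) (f : M ⟶ L₀) (g : L₀ ⟶ C')
      (wfg : f ≫ g = 0), Epi g ∧ (ShortComplex.mk f g wfg).Exact ∧
      (∀ X ∈ F, HomLeftAcyclicSeq X f g) ∧ (∀ Y ∈ L, HomRightAcyclicSeq Y f g)) :
    BalancedPair F L := by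
  choose K F₀ hF₀ f g w hmono _hexact hLft hRt using h1
  choose L₀ Q hL₀ f' g' w' hepi _hexact' hLft' hRt' using h2
  refine ⟨hF, hL, ?_, ?_⟩
  · -- resolutions
    intro M
    let P : ℕ → C := fun n => Nat.rec M (fun _ p => K p) n
    refine ⟨{ obj := fun n => F₀ (P n),
              d := fun n => g (P (n+1)) ≫ f (P n),
              ε := g M,
              d_comp_d := ?_, d_comp_ε := ?_ }, fun n => hF₀ (P n), ?_, ?_⟩
    · intro n
      have hw : f (P (n+1)) ≫ g (P (n+1)) = 0 := w (P (n+1))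
      rw [Category.assoc, ← Category.assoc (f (P (n+1))), hw, zero_comp, comp_zero]
    · show (g (P 1) ≫ f M) ≫ g M = 0
      rw [Category.assoc, w M, comp_zero]
    · -- HomLeftAcyclic for X ∈ F
      intro X hX
      have HL : ∀ N : C, HomLeftAcyclicSeq X (f N) (g N) := fun N => hLft N X hX
      refine ⟨?_, ?_, ?_⟩
      · intro u
        exact (HL M).2.2 u
      · intro h hh
        obtain ⟨k', hk'⟩ := (HL M).2.1 h hh
        obtain ⟨k, hk⟩ := (HL (P 1)).2.2 k'
        refine ⟨k, ?_⟩
        show k ≫ (g (P 1) ≫ f M) = h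
        rw [← Category.assoc, hk, hk']
      · intro n h hh
        have : h ≫ g (P (n+1)) = 0 := by
          have := hmono (P n)
          rw [← cancel_mono (f (P n)), Category.assoc, zero_comp]
          exact hh
        obtain ⟨k', hk'⟩ := (HL (P (n+1))).2.1 h this
        obtain ⟨k, hk⟩ := (HL (P (n+2))).2.2 k'
        refine ⟨k, ?_⟩
        show k ≫ (g (P (n+2)) ≫ f (P (n+1))) = h
        rw [← Category.assoc, hk, hk']
    · -- HomRightAcyclic for Y ∈ L
      intro Y hY
      have HR : ∀ N : C, HomRightAcyclicSeq Y (f N) (g N) := fun N => hRt N Y hY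
      refine ⟨?_, ?_, ?_⟩
      · intro u hu
        exact (HR M).1 u hu
      · intro u hu
        have h0 : f M ≫ u = 0 := by
          refine (HR (P 1)).1 (f M ≫ u) ?_
          rw [← Category.assoc]
          exact hu
        exact (HR M).2.1 u h0
      · intro n u hu
        have h0 : f (P (n+1)) ≫ u = 0 := by
          refine (HR (P (n+2))).1 (f (P (n+1)) ≫ u) ?_
          rw [← Category.assoc]
          exact hu
        obtain ⟨u', hu'⟩ := (HR (P (n+1))).2.1 u h0
        obtain ⟨v, hv⟩ := (HR (P n)).2.2 u'
        refine ⟨v, ?_⟩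
        show (g (P (n+1)) ≫ f (P n)) ≫ v = u
        rw [Category.assoc, hv, hu']
  · -- coresolutions
    intro M
    let P : ℕ → C := fun n => Nat.rec M (fun _ p => Q p) n
    refine ⟨{ obj := fun n => L₀ (P n),
              d := fun n => g' (P n) ≫ f' (P (n+1)),
              η := f' M,
              d_comp_d := ?_, η_comp_d := ?_ }, fun n => hL₀ (P n), ?_, ?_⟩
    · intro n
      have hw : f' (P (n+1)) ≫ g' (P (n+1)) = 0 := w' (P (n+1))
      rw [Category.assoc, ← Category.assoc (f' (P (n+1))), hw, zero_comp, comp_zero]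
    · show f' M ≫ (g' M ≫ f' (P 1)) = 0
      rw [← Category.assoc, w' M, zero_comp]
    · -- HomLeftAcyclic for X ∈ F
      intro X hX
      have HL : ∀ N : C, HomLeftAcyclicSeq X (f' N) (g' N) := fun N => hLft' N X hX
      refine ⟨?_, ?_, ?_⟩
      · intro u hu
        exact (HL M).1 u hu
      · intro u hu
        have h0 : u ≫ g' M = 0 := by
          refine (HL (P 1)).1 (u ≫ g' M) ?_
          rw [Category.assoc]
          exact hu
        exact (HL M).2.1 u h0
      · intro n u hu
        have h0 : u ≫ g' (P (n+1)) = 0 := by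
          refine (HL (P (n+2))).1 (u ≫ g' (P (n+1))) ?_
          rw [Category.assoc]
          exact hu
        obtain ⟨u', hu'⟩ := (HL (P (n+1))).2.1 u h0
        obtain ⟨v, hv⟩ := (HL (P n)).2.2 u'
        refine ⟨v, ?_⟩
        show v ≫ (g' (P n) ≫ f' (P (n+1))) = u
        rw [← Category.assoc, hv, hu']
    · -- HomRightAcyclic for Y ∈ L
      intro Y hY
      have HR : ∀ N : C, HomRightAcyclicSeq Y (f' N) (g' N) := fun N => hRt' N Y hY
      refine ⟨?_, ?_, ?_⟩
      · intro u
        exact (HR M).2.2 u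
      · intro h hh
        obtain ⟨k', hk'⟩ := (HR M).2.1 h hh
        obtain ⟨k, hk⟩ := (HR (P 1)).2.2 k'
        refine ⟨k, ?_⟩
        show (g' M ≫ f' (P 1)) ≫ k = h
        rw [Category.assoc, hk, hk']
      · intro n h hh
        have : f' (P (n+1)) ≫ h = 0 := by
          have := hepi (P n)
          rw [← cancel_epi (g' (P n)), comp_zero, ← Category.assoc]
          exact hh
        obtain ⟨k', hk'⟩ := (HR (P (n+1))).2.1 h this
        obtain ⟨k, hk⟩ := (HR (P (n+2))).2.2 k'
        refine ⟨k, ?_⟩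
        show (g' (P (n+1)) ≫ f' (P (n+2))) ≫ k = h
        rw [Category.assoc, hk, hk']

end Paper
end

section
/- If (F_1, L) and (F_2, L) are two admissible balanced pairs in an abelian category C, then the classes of direct summands of objects of F_1 and of F_2 coincide: Smd(F_1) = Smd(F_2). -/
open CategoryTheory Limits

namespace Paper

universe w v u

variable {C : Type u} [Category.{v} C] [Abelian C]

/-!
Let `A` be a direct summand of `B ∈ F₁`, with `i : A ⟶ B`, `r : B ⟶ A`, `i ≫ r = 𝟙 A`.
The first step `ε : F₀ ⟶ A` of a `Hom(-, L)`-acyclic `F₂`-resolution is epic (admissibility)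
and its kernel inclusion is `L`-monic: every map from `ker ε` into an object of `L` extends
to `F₀`. Dually, the pair `(F₁, L)` embeds every object into an object of `L` with
`F₁`-epic cokernel (maps from objects of `F₁` lift through it), and a diagram chase shows that an epimorphism onto an object of `F₁`
with `L`-monic kernel inclusion splits. Pulling back along maps from `F₁`, every epimorphism
with `L`-monic kernel inclusion is `F₁`-epic. Hence `r` factors through `ε`, and `A` is a
direct summand of `F₀ ∈ F₂`.
-/

def RelEpic (F : Set C) {E M : C} (g : E ⟶ M) : Prop :=
  ∀ X ∈ F, ∀ u : X ⟶ M, ∃ w : X ⟶ E, w ≫ g = u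

def RelMonic (L : Set C) {K E : C} (f : K ⟶ E) : Prop :=
  ∀ Y ∈ L, ∀ h : K ⟶ Y, ∃ v : E ⟶ Y, f ≫ v = h

variable {F L : Set C}

omit [Abelian C] in
lemma RelMonic.of_comp_eq {K E K' E' : C} {f : K ⟶ E} (hf : RelMonic L f) {f' : K' ⟶ E'}
    (φ : K' ⟶ K) [IsSplitMono φ] (e : E' ⟶ E) (w : f' ≫ e = φ ≫ f) : RelMonic L f' := by
  intro Y hY h
  obtain ⟨v, hv⟩ := hf Y hY (retraction φ ≫ h)
  exact ⟨e ≫ v, by rw [reassoc_of% w, hv, IsSplitMono.id_assoc]⟩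

lemma relMonic_kernel_ι_pullback_snd {P M X : C} {p : P ⟶ M} (hp : RelMonic L (kernel.ι p))
    (u : X ⟶ M) : RelMonic L (kernel.ι (pullback.snd p u)) := by
  let φ : kernel (pullback.snd p u) ⟶ kernel p :=
    kernel.lift p (kernel.ι _ ≫ pullback.fst p u)
      (by rw [Category.assoc, pullback.condition, kernel.condition_assoc, zero_comp])
  let ψ : kernel p ⟶ kernel (pullback.snd p u) :=
    kernel.lift _ (pullback.lift (kernel.ι p) 0 (by rw [kernel.condition, zero_comp]))
      (pullback.lift_snd _ _ _)
  have : IsSplitMono φ := IsSplitMono.mk' ⟨ψ, by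
    rw [← cancel_mono (kernel.ι _)]
    apply pullback.hom_ext
    · simp only [φ, ψ, Category.assoc, Category.id_comp, kernel.lift_ι_assoc]
      rw [pullback.lift_fst, kernel.lift_ι]
    · simp only [φ, ψ, Category.assoc, Category.id_comp, kernel.lift_ι_assoc]
      rw [pullback.lift_snd, comp_zero, kernel.condition]⟩
  exact hp.of_comp_eq φ (pullback.fst p u) (by simp [φ])

lemma exists_retraction_kernel_ι {E M L₀ : C} {g : E ⟶ M} [Epi g]
    (hg : RelMonic L (kernel.ι g)) {η : kernel g ⟶ L₀} [Mono η] (hL₀ : L₀ ∈ L)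
    (hc : RelEpic F (cokernel.π η)) (hM : M ∈ F) :
    ∃ s : E ⟶ kernel g, kernel.ι g ≫ s = 𝟙 _ := by
  obtain ⟨t, ht⟩ := hg L₀ hL₀ η
  let q : M ⟶ cokernel η :=
    Abelian.epiDesc g (t ≫ cokernel.π η) (by rw [reassoc_of% ht, cokernel.condition])
  obtain ⟨q', hq'⟩ := hc M hM q
  -- `t - g ≫ q'` factors through `η`, and the factorisation is a retraction of `kernel.ι g`
  -- because `kernel.ι g ≫ t = η`.
  have hs : (t - g ≫ q') ≫ cokernel.π η = 0 := by
    rw [Preadditive.sub_comp, Category.assoc, hq', Abelian.comp_epiDesc, sub_self]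
  refine ⟨Abelian.monoLift η _ hs, ?_⟩
  rw [← cancel_mono η, Category.assoc, Abelian.monoLift_comp, Preadditive.comp_sub, ht,
    kernel.condition_assoc, zero_comp, sub_zero, Category.id_comp]

namespace Resolution

variable {M : C} (R : Resolution M)

lemma epi_kernel_lift_d_zero {G : C} (π : G ⟶ kernel R.ε) [Epi π] (hG : R.HomLeftAcyclic G) :
    Epi (kernel.lift R.ε (R.d 0) R.d_comp_ε) := by
  obtain ⟨m, hm⟩ := hG.2.1 (π ≫ kernel.ι R.ε) (by simp)
  have hmπ : m ≫ kernel.lift R.ε (R.d 0) R.d_comp_ε = π := by ext; simpa using hm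
  have : Epi (m ≫ kernel.lift R.ε (R.d 0) R.d_comp_ε) := hmπ ▸ inferInstance
  exact epi_of_epi m _

lemma relMonic_kernel_ι (hepi : Epi (kernel.lift R.ε (R.d 0) R.d_comp_ε))
    (hR : ∀ Y ∈ L, R.HomRightAcyclic Y) : RelMonic L (kernel.ι R.ε) := by
  intro Y hY h
  have hd : R.d 1 ≫ kernel.lift R.ε (R.d 0) R.d_comp_ε = 0 := by ext; simp [R.d_comp_d]
  obtain ⟨v, hv⟩ := (hR Y hY).2.2 0 (kernel.lift R.ε (R.d 0) R.d_comp_ε ≫ h)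
    (by simp [reassoc_of% hd])
  exact ⟨v, by rw [← cancel_epi (kernel.lift R.ε (R.d 0) R.d_comp_ε), kernel.lift_ι_assoc, hv]⟩

end Resolution

namespace Coresolution

variable {M : C} (Q : Coresolution M)

lemma mono_cokernel_desc_d_zero {G : C} (ι : cokernel Q.η ⟶ G) [Mono ι]
    (hG : Q.HomRightAcyclic G) : Mono (cokernel.desc Q.η (Q.d 0) Q.η_comp_d) := by
  obtain ⟨k, hk⟩ := hG.2.1 (cokernel.π Q.η ≫ ι) (by simp)
  have hιk : cokernel.desc Q.η (Q.d 0) Q.η_comp_d ≫ k = ι := by ext; simpa using hk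
  have : Mono (cokernel.desc Q.η (Q.d 0) Q.η_comp_d ≫ k) := hιk ▸ inferInstance
  exact mono_of_mono _ k

lemma relEpic_cokernel_π (hmono : Mono (cokernel.desc Q.η (Q.d 0) Q.η_comp_d))
    (hQ : ∀ X ∈ F, Q.HomLeftAcyclic X) : RelEpic F (cokernel.π Q.η) := by
  intro X hX u
  have hd : cokernel.desc Q.η (Q.d 0) Q.η_comp_d ≫ Q.d 1 = 0 := by ext; simp [Q.d_comp_d]
  obtain ⟨l, hl⟩ := (hQ X hX).2.2 0 (u ≫ cokernel.desc Q.η (Q.d 0) Q.η_comp_d)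
    (by simp [hd])
  exact ⟨l, by rw [← cancel_mono (cokernel.desc Q.η (Q.d 0) Q.η_comp_d)]; simpa using hl⟩

end Coresolution

namespace BalancedPair

variable (hb : BalancedPair F L) (ha : Admissible F L)
include hb ha

lemma exists_epi_relMonic_kernel_ι (M : C) :
    ∃ (F₀ : C) (ε : F₀ ⟶ M), F₀ ∈ F ∧ Epi ε ∧ RelMonic L (kernel.ι ε) := by
  obtain ⟨R, hRF, hRleft, hRright⟩ := hb.2.2.1 M
  obtain ⟨G, π, hπ⟩ := hb.1 (kernel R.ε)
  have : Epi π := ha.1 _ _ _ hπ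
  refine ⟨R.obj 0, R.ε, hRF 0, ha.1 _ _ _ ⟨hRF 0, fun X hX ↦ (hRleft X hX).1⟩, ?_⟩
  exact R.relMonic_kernel_ι (R.epi_kernel_lift_d_zero π (hRleft G hπ.1)) hRright

lemma exists_mono_relEpic_cokernel_π (K : C) :
    ∃ (L₀ : C) (η : K ⟶ L₀), L₀ ∈ L ∧ Mono η ∧ RelEpic F (cokernel.π η) := by
  obtain ⟨Q, hQL, hQleft, hQright⟩ := hb.2.2.2 K
  obtain ⟨G, ι, hι⟩ := hb.2.1 (cokernel Q.η)
  have : Mono ι := ha.2 _ _ _ hι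
  refine ⟨Q.obj 0, Q.η, hQL 0, ha.2 _ _ _ ⟨hQL 0, fun Y hY ↦ (hQright Y hY).1⟩, ?_⟩
  exact Q.relEpic_cokernel_π (Q.mono_cokernel_desc_d_zero ι (hQright G hι.1)) hQleft

lemma relEpic_of_relMonic_kernel_ι {E M : C} {g : E ⟶ M} [Epi g]
    (hg : RelMonic L (kernel.ι g)) : RelEpic F g := by
  intro X hX u
  obtain ⟨L₀, η, hL₀, hη, hc⟩ := hb.exists_mono_relEpic_cokernel_π ha (kernel (pullback.snd g u))
  obtain ⟨s, hs⟩ := exists_retraction_kernel_ι (relMonic_kernel_ι_pullback_snd hg u) hL₀ hc hX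
  obtain ⟨m, hm⟩ : ∃ m : X ⟶ pullback g u, m ≫ pullback.snd g u = 𝟙 X :=
    let σ := ShortComplex.Splitting.ofExactOfRetraction _
      (ShortComplex.kernelSequence_exact (pullback.snd g u)) s hs
      (inferInstance : Epi (pullback.snd g u))
    ⟨σ.s, σ.s_g⟩
  exact ⟨m ≫ pullback.fst g u, by rw [Category.assoc, pullback.condition, reassoc_of% hm]⟩

end BalancedPair

lemma smd_subset_smd {F₁ F₂ : Set C}
    (hb₁ : BalancedPair F₁ L) (ha₁ : Admissible F₁ L)
    (hb₂ : BalancedPair F₂ L) (ha₂ : Admissible F₂ L) : Smd F₁ ⊆ Smd F₂ := by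
  rintro A ⟨B, hB, i, r, hir⟩
  obtain ⟨F₀, ε, hF₀, hε, hker⟩ := hb₂.exists_epi_relMonic_kernel_ι ha₂ A
  obtain ⟨w, hw⟩ := hb₁.relEpic_of_relMonic_kernel_ι ha₁ hker B hB r
  exact ⟨F₀, hF₀, i ≫ w, ε, by rw [Category.assoc, hw, hir]⟩

/-- If `(F₁, L)` and `(F₂, L)` are two admissible balanced pairs in an abelian category,
then `Smd F₁ = Smd F₂`. -/
theorem smd_eq_of_admissible_balanced_pairs
    {C : Type u} [Category.{v} C] [Abelian C]
    (F₁ F₂ L : Set C)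
    (hb₁ : BalancedPair F₁ L) (ha₁ : Admissible F₁ L)
    (hb₂ : BalancedPair F₂ L) (ha₂ : Admissible F₂ L) :
    Smd F₁ = Smd F₂ :=
  (smd_subset_smd hb₁ ha₁ hb₂ ha₂).antisymm (smd_subset_smd hb₂ ha₂ hb₁ ha₁)

end Paper
end

section
/- If (F,G,L) is a complete hereditary cotorsion triplet in an abelian category C, then (F,L) is an admissible balanced pair in C. -/
open CategoryTheory Limits

namespace Paper

universe w v u

variable {C : Type u} [Category.{v} C] [Abelian C]

/-!
Splicing the approximation sequences `0 ⟶ K' ⟶ F₀ ⟶ K ⟶ 0` (`F₀ ∈ F`, `K' ∈ G`) given by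
the completeness of `(F, G)` yields an `F`-resolution with syzygies in `G`; dually, the
completeness of `(G, L)` yields an `L`-coresolution with cosyzygies in `G`. Applying `Hom(X, -)`
with `X ∈ F` to the resolution, or `Hom(-, Y)` with `Y ∈ L` to the coresolution, stays exact
because `Ext¹(F, G) = 0 = Ext¹(G, L)`. In the two mixed cases the obstruction lies in an `Ext¹`
involving an arbitrary syzygy `K` (for instance `K = M`); it vanishes after dimension shifting
along the other approximation sequence of `K`, because both cotorsion pairs are hereditary.
-/

open Abelian

section ExtLifting

variable [HasExt.{w} C] {S : ShortComplex C}

lemma exists_lift_of_comp_extClass_eq_zero (hS : S.ShortExact) {X : C} (u : X ⟶ S.X₃)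
    (hu : (Ext.mk₀ u).comp hS.extClass (zero_add 1) = 0) :
    ∃ v : X ⟶ S.X₂, v ≫ S.g = u := by
  obtain ⟨x, hx⟩ := Ext.covariant_sequence_exact₃ X hS (Ext.mk₀ u) (zero_add 1) hu
  obtain ⟨v, rfl⟩ := (Ext.mk₀_bijective X S.X₂).2 x
  rw [Ext.mk₀_comp_mk₀] at hx
  exact ⟨v, (Ext.mk₀_bijective X S.X₃).1 hx⟩

lemma exists_extension_of_extClass_comp_eq_zero (hS : S.ShortExact) {Y : C} (u : S.X₁ ⟶ Y)
    (hu : hS.extClass.comp (Ext.mk₀ u) (add_zero 1) = 0) :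
    ∃ v : S.X₂ ⟶ Y, S.f ≫ v = u := by
  obtain ⟨x, hx⟩ := Ext.contravariant_sequence_exact₁ hS Y (Ext.mk₀ u) (add_zero 1) hu
  obtain ⟨v, rfl⟩ := (Ext.mk₀_bijective S.X₂ Y).2 x
  rw [Ext.mk₀_comp_mk₀] at hx
  exact ⟨v, (Ext.mk₀_bijective S.X₁ Y).1 hx⟩

lemma exists_lift_of_subsingleton_ext (hS : S.ShortExact) {X : C}
    (hX : Subsingleton (Ext X S.X₁ 1)) (u : X ⟶ S.X₃) : ∃ v : X ⟶ S.X₂, v ≫ S.g = u :=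
  exists_lift_of_comp_extClass_eq_zero hS u (Subsingleton.elim _ _)

lemma exists_extension_of_subsingleton_ext (hS : S.ShortExact) {Y : C}
    (hY : Subsingleton (Ext S.X₃ Y 1)) (u : S.X₁ ⟶ Y) : ∃ v : S.X₂ ⟶ Y, S.f ≫ v = u :=
  exists_extension_of_extClass_comp_eq_zero hS u (Subsingleton.elim _ _)

lemma eq_zero_of_comp_extClass_eq_zero (hS : S.ShortExact) {X : C} {n m : ℕ}
    (hX : Subsingleton (Ext X S.X₂ n)) (x : Ext X S.X₃ n) (hm : n + 1 = m)
    (hx : x.comp hS.extClass hm = 0) : x = 0 := by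
  obtain ⟨y, rfl⟩ := Ext.covariant_sequence_exact₃ X hS x hm hx
  rw [Subsingleton.elim y 0, Ext.zero_comp]

lemma eq_zero_of_extClass_comp_eq_zero (hS : S.ShortExact) {Y : C} {n m : ℕ}
    (hY : Subsingleton (Ext S.X₂ Y n)) (x : Ext S.X₁ Y n) (hm : 1 + n = m)
    (hx : hS.extClass.comp x hm = 0) : x = 0 := by
  obtain ⟨y, rfl⟩ := Ext.contravariant_sequence_exact₁ hS Y x hm hx
  rw [Subsingleton.elim y 0, Ext.comp_zero]

/-- Dimension shifting along `0 ⟶ B ⟶ A ⟶ S.X₁ ⟶ 0`: as `Ext¹(X, A) = 0`, the obstruction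
to lifting `u` in `Ext¹(X, S.X₁)` embeds into `Ext²(X, B)`, where it factors through
`Ext²(S.X₃, B) = 0`. -/
lemma exists_lift_of_dimension_shift (hS : S.ShortExact) {X B A : C} {i : B ⟶ A}
    {p : A ⟶ S.X₁} {w : i ≫ p = 0} (hT : (ShortComplex.mk i p w).ShortExact)
    (hA : Subsingleton (Ext X A 1)) (hB : Subsingleton (Ext S.X₃ B 2)) (u : X ⟶ S.X₃) :
    ∃ v : X ⟶ S.X₂, v ≫ S.g = u := by
  refine exists_lift_of_comp_extClass_eq_zero hS u
    (eq_zero_of_comp_extClass_eq_zero hT hA _ rfl ?_)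
  rw [Ext.comp_assoc _ _ _ (zero_add 1) rfl rfl, hB.elim (hS.extClass.comp hT.extClass rfl) 0,
    Ext.comp_zero]

lemma exists_extension_of_dimension_shift (hS : S.ShortExact) {Y B A : C} {i : S.X₃ ⟶ B}
    {p : B ⟶ A} {w : i ≫ p = 0} (hT : (ShortComplex.mk i p w).ShortExact)
    (hB : Subsingleton (Ext B Y 1)) (hA : Subsingleton (Ext A S.X₁ 2)) (u : S.X₁ ⟶ Y) :
    ∃ v : S.X₂ ⟶ Y, S.f ≫ v = u := by
  refine exists_extension_of_extClass_comp_eq_zero hS u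
    (eq_zero_of_extClass_comp_eq_zero hT hB _ rfl ?_)
  rw [← Ext.comp_assoc_of_third_deg_zero, hA.elim (hT.extClass.comp hS.extClass rfl) 0,
    Ext.zero_comp]

end ExtLifting

structure SyzygySequence (C : Type u) [Category.{v} C] [Abelian C] where
  K : ℕ → C
  P : ℕ → C
  f : ∀ n, K (n + 1) ⟶ P n
  g : ∀ n, P n ⟶ K n
  w : ∀ n, f n ≫ g n = 0
  shortExact : ∀ n, (ShortComplex.mk (f n) (g n) (w n)).ShortExact

structure CosyzygySequence (C : Type u) [Category.{v} C] [Abelian C] where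
  K : ℕ → C
  P : ℕ → C
  f : ∀ n, K n ⟶ P n
  g : ∀ n, P n ⟶ K (n + 1)
  w : ∀ n, f n ≫ g n = 0
  shortExact : ∀ n, (ShortComplex.mk (f n) (g n) (w n)).ShortExact

namespace SyzygySequence

variable (R : SyzygySequence C)

instance (n : ℕ) : Mono (R.f n) := (R.shortExact n).mono_f

instance (n : ℕ) : Epi (R.g n) := (R.shortExact n).epi_g

def toResolution : Resolution (R.K 0) where
  obj := R.P
  d n := R.g (n + 1) ≫ R.f n
  ε := R.g 0
  d_comp_d n := by rw [Category.assoc, reassoc_of% R.w (n + 1), zero_comp, comp_zero]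
  d_comp_ε := by rw [Category.assoc, R.w 0, comp_zero]

lemma exists_comp_g_comp_f_eq {X : C} (hX : ∀ n (u : X ⟶ R.K n), ∃ v, v ≫ R.g n = u)
    (n : ℕ) (u : X ⟶ R.P n) (hu : u ≫ R.g n = 0) :
    ∃ v : X ⟶ R.P (n + 1), v ≫ R.g (n + 1) ≫ R.f n = u := by
  obtain ⟨v, hv⟩ := hX (n + 1) ((R.shortExact n).exact.lift u hu)
  refine ⟨v, ?_⟩
  rw [reassoc_of% hv]
  exact (R.shortExact n).exact.lift_f u hu

lemma homLeftAcyclic_toResolution {X : C} (hX : ∀ n (u : X ⟶ R.K n), ∃ v, v ≫ R.g n = u) :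
    R.toResolution.HomLeftAcyclic X :=
  ⟨hX 0, R.exists_comp_g_comp_f_eq hX 0, fun n u hu =>
    R.exists_comp_g_comp_f_eq hX (n + 1) u
      (zero_of_comp_mono (R.f n) ((Category.assoc _ _ _).trans hu))⟩

lemma homRightAcyclic_toResolution {Y : C}
    (hY : ∀ n (u : R.K (n + 1) ⟶ Y), ∃ v, R.f n ≫ v = u) :
    R.toResolution.HomRightAcyclic Y := by
  refine ⟨fun u hu => zero_of_epi_comp (R.g 0) hu, fun u hu => ?_, fun n u hu => ?_⟩
  · have hu' := zero_of_epi_comp (R.g 1) ((Category.assoc _ _ _).symm.trans hu)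
    exact ⟨_, (R.shortExact 0).exact.g_desc u hu'⟩
  · have hu' := zero_of_epi_comp (R.g (n + 2)) ((Category.assoc _ _ _).symm.trans hu)
    obtain ⟨v, hv⟩ := hY n ((R.shortExact (n + 1)).exact.desc u hu')
    refine ⟨v, ?_⟩
    change (R.g (n + 1) ≫ R.f n) ≫ v = u
    rw [Category.assoc, hv]
    exact (R.shortExact (n + 1)).exact.g_desc u hu'

end SyzygySequence

namespace CosyzygySequence

variable (R : CosyzygySequence C)

instance (n : ℕ) : Mono (R.f n) := (R.shortExact n).mono_f

instance (n : ℕ) : Epi (R.g n) := (R.shortExact n).epi_g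

def toCoresolution : Coresolution (R.K 0) where
  obj := R.P
  d n := R.g n ≫ R.f (n + 1)
  η := R.f 0
  d_comp_d n := by rw [Category.assoc, reassoc_of% R.w (n + 1), zero_comp, comp_zero]
  η_comp_d := by rw [reassoc_of% R.w 0, zero_comp]

lemma exists_g_comp_f_comp_eq {Y : C} (hY : ∀ n (u : R.K n ⟶ Y), ∃ v, R.f n ≫ v = u)
    (n : ℕ) (u : R.P n ⟶ Y) (hu : R.f n ≫ u = 0) :
    ∃ v : R.P (n + 1) ⟶ Y, (R.g n ≫ R.f (n + 1)) ≫ v = u := by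
  obtain ⟨v, hv⟩ := hY (n + 1) ((R.shortExact n).exact.desc u hu)
  refine ⟨v, ?_⟩
  rw [Category.assoc, hv]
  exact (R.shortExact n).exact.g_desc u hu

lemma homLeftAcyclic_toCoresolution {X : C}
    (hX : ∀ n (u : X ⟶ R.K (n + 1)), ∃ v, v ≫ R.g n = u) :
    R.toCoresolution.HomLeftAcyclic X := by
  refine ⟨fun u hu => zero_of_comp_mono (R.f 0) hu, fun u hu => ?_, fun n u hu => ?_⟩
  · have hu' := zero_of_comp_mono (R.f 1) ((Category.assoc _ _ _).trans hu)
    exact ⟨_, (R.shortExact 0).exact.lift_f u hu'⟩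
  · have hu' := zero_of_comp_mono (R.f (n + 2)) ((Category.assoc _ _ _).trans hu)
    obtain ⟨v, hv⟩ := hX n ((R.shortExact (n + 1)).exact.lift u hu')
    refine ⟨v, ?_⟩
    change v ≫ R.g n ≫ R.f (n + 1) = u
    rw [reassoc_of% hv]
    exact (R.shortExact (n + 1)).exact.lift_f u hu'

lemma homRightAcyclic_toCoresolution {Y : C}
    (hY : ∀ n (u : R.K n ⟶ Y), ∃ v, R.f n ≫ v = u) :
    R.toCoresolution.HomRightAcyclic Y :=
  ⟨hY 0, R.exists_g_comp_f_comp_eq hY 0, fun n u hu =>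
    R.exists_g_comp_f_comp_eq hY (n + 1) u
      (zero_of_epi_comp (R.g n) ((Category.assoc _ _ _).symm.trans hu))⟩

end CosyzygySequence

lemma exists_syzygySequence {Y X : Set C} (h : ∀ M : C, ∃ B ∈ X, ∃ A ∈ Y, SES B A M)
    (M : C) :
    ∃ R : SyzygySequence C, R.K 0 = M ∧ (∀ n, R.K (n + 1) ∈ X) ∧ ∀ n, R.P n ∈ Y := by
  choose B hB A hA f g w hS using h
  let K : ℕ → C := fun n => Nat.rec M (fun _ N => B N) n
  exact ⟨⟨K, fun n => A (K n), fun n => f (K n), fun n => g (K n), fun n => w (K n),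
    fun n => hS (K n)⟩, rfl, fun n => hB (K n), fun n => hA (K n)⟩

lemma exists_cosyzygySequence {Y X : Set C} (h : ∀ M : C, ∃ B ∈ X, ∃ A ∈ Y, SES M B A)
    (M : C) :
    ∃ R : CosyzygySequence C, R.K 0 = M ∧ (∀ n, R.K (n + 1) ∈ Y) ∧ ∀ n, R.P n ∈ X := by
  choose B hB A hA f g w hS using h
  let K : ℕ → C := fun n => Nat.rec M (fun _ N => A N) n
  exact ⟨⟨K, fun n => B (K n), fun n => f (K n), fun n => g (K n), fun n => w (K n),
    fun n => hS (K n)⟩, rfl, fun n => hA (K n), fun n => hB (K n)⟩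

section Approximations

variable {F G L : Set C}

lemma Complete.epi_of_isPrecover (hc : Complete F G) {F₀ M : C} {φ : F₀ ⟶ M}
    (hφ : IsPrecover F φ) : Epi φ := by
  obtain ⟨B, hB, A, hA, f, g, w, hS⟩ := (hc M).1
  obtain ⟨h, hh⟩ := hφ.2 A hA g
  have : Epi (h ≫ φ) := hh ▸ hS.epi_g
  exact epi_of_epi h φ

lemma Complete.mono_of_isPreenvelope (hc : Complete G L) {M L₀ : C} {ψ : M ⟶ L₀}
    (hψ : IsPreenvelope L ψ) : Mono ψ := by
  obtain ⟨B, hB, A, hA, f, g, w, hS⟩ := (hc M).2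
  obtain ⟨h, hh⟩ := hψ.2 B hB f
  have : Mono (ψ ≫ h) := hh ▸ hS.mono_f
  exact mono_of_mono ψ h

variable [HasExt.{w} C]

lemma Complete.precovering (hFG : IsCotorsionPair.{w} F G) (hc : Complete F G) :
    Precovering F := fun M => by
  obtain ⟨B, hB, A, hA, f, g, w, hS⟩ := (hc M).1
  exact ⟨A, g, hA, fun X hX =>
    exists_lift_of_subsingleton_ext hS ((hFG.mem_left_iff X).1 hX B hB)⟩

lemma Complete.preenveloping (hGL : IsCotorsionPair.{w} G L) (hc : Complete G L) :
    Preenveloping L := fun M => by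
  obtain ⟨B, hB, A, hA, f, g, w, hS⟩ := (hc M).2
  exact ⟨B, f, hB, fun Y hY =>
    exists_extension_of_subsingleton_ext hS ((hGL.mem_left_iff A).1 hA Y hY)⟩

lemma exists_resolution (hFG : IsCotorsionPair.{w} F G) (hGL : IsCotorsionPair.{w} G L)
    (hFGc : Complete F G) (hFGh : Hereditary.{w} F G) (M : C) :
    ∃ R : Resolution M, R.ObjsIn F ∧
      (∀ X ∈ F, R.HomLeftAcyclic X) ∧ (∀ Y ∈ L, R.HomRightAcyclic Y) := by
  obtain ⟨R, rfl, hK, hP⟩ := exists_syzygySequence (fun M => (hFGc M).1) M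
  refine ⟨R.toResolution, hP, fun X hX => R.homLeftAcyclic_toResolution fun n =>
    exists_lift_of_subsingleton_ext (R.shortExact n) ((hFG.mem_left_iff X).1 hX _ (hK n)),
    fun Y hY => R.homRightAcyclic_toResolution fun n => ?_⟩
  obtain ⟨B, hB, A, hA, i, p, w, hT⟩ := (hFGc (R.K n)).2
  exact exists_extension_of_dimension_shift (R.shortExact n) hT
    ((hGL.mem_left_iff B).1 hB Y hY) (hFGh A hA _ (hK n) 2 two_pos)

lemma exists_coresolution (hFG : IsCotorsionPair.{w} F G) (hGL : IsCotorsionPair.{w} G L)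
    (hGLc : Complete G L) (hGLh : Hereditary.{w} G L) (M : C) :
    ∃ R : Coresolution M, R.ObjsIn L ∧
      (∀ X ∈ F, R.HomLeftAcyclic X) ∧ (∀ Y ∈ L, R.HomRightAcyclic Y) := by
  obtain ⟨R, rfl, hK, hP⟩ := exists_cosyzygySequence (fun M => (hGLc M).2) M
  refine ⟨R.toCoresolution, hP, fun X hX => R.homLeftAcyclic_toCoresolution fun n => ?_,
    fun Y hY => R.homRightAcyclic_toCoresolution fun n =>
      exists_extension_of_subsingleton_ext (R.shortExact n)
        ((hGL.mem_left_iff _).1 (hK n) Y hY)⟩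
  obtain ⟨B, hB, A, hA, i, p, w, hT⟩ := (hGLc (R.K n)).1
  exact exists_lift_of_dimension_shift (R.shortExact n) hT
    ((hFG.mem_left_iff X).1 hX A hA) (hGLh _ (hK n) B hB 2 two_pos)

end Approximations

/-- A complete hereditary cotorsion triplet `(F, G, L)` gives an admissible
balanced pair `(F, L)`. -/
theorem balanced_of_complete_hereditary_cotorsion_triplet
    {C : Type u} [Category.{v} C] [Abelian C] [HasExt.{w} C]
    (F G L : Set C)
    (hFG : IsCotorsionPair.{w} F G) (hGL : IsCotorsionPair.{w} G L)
    (hFGc : Complete F G) (hGLc : Complete G L)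
    (hFGh : Hereditary.{w} F G) (hGLh : Hereditary.{w} G L) :
    BalancedPair F L ∧ Admissible F L :=
  ⟨⟨hFGc.precovering hFG, hGLc.preenveloping hGL, exists_resolution hFG hGL hFGc hFGh,
      exists_coresolution hFG hGL hGLc hGLh⟩,
    fun _ _ _ => hFGc.epi_of_isPrecover, fun _ _ _ => hGLc.mono_of_isPreenvelope⟩

end Paper
end

section
/- Let (F,G,L) be a complete hereditary cotorsion triplet in an abelian category C. Then F ∩ G equals the class of projective objects of C, and G ∩ L equals the class of injective objects of C. -/
/-
Projectives `P` satisfy `Ext¹(P, -) = 0`, so they lie in `F = ⊥G` and in `G = ⊥L`. Conversely,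
let `A ∈ F ∩ G` and take any `K` with its approximation `0 ⟶ L₀ ⟶ G₀ ⟶ K ⟶ 0`, `L₀ ∈ L`,
`G₀ ∈ G`. In the exact sequence `Ext¹(A, G₀) ⟶ Ext¹(A, K) ⟶ Ext²(A, L₀)` the left term vanishes
because `A ∈ F` and the right one because `A ∈ G` and `(G, L)` is hereditary, so
`Ext¹(A, -) = 0` and `A` is projective. The injective half is dual.
-/

open CategoryTheory Limits

namespace Paper

universe w v u

variable {C : Type u} [Category.{v} C] [Abelian C]

section CotorsionTriplet

open Abelian

variable [HasExt.{w} C]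

lemma subsingleton_ext_one_X₃_of_shortExact {S : ShortComplex C}
    (hS : S.ShortExact) {A : C} (h₂ : Subsingleton (Ext A S.X₂ 1))
    (h₁ : Subsingleton (Ext A S.X₁ 2)) : Subsingleton (Ext A S.X₃ 1) :=
  subsingleton_of_forall_eq 0 fun z => by
    obtain ⟨x₂, hx₂⟩ := Ext.covariant_sequence_exact₃ A hS z rfl (Subsingleton.elim _ _)
    rw [← hx₂, Subsingleton.elim x₂ 0, Ext.zero_comp]

lemma subsingleton_ext_one_X₁_of_shortExact {S : ShortComplex C}
    (hS : S.ShortExact) {B : C} (h₂ : Subsingleton (Ext S.X₂ B 1))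
    (h₃ : Subsingleton (Ext S.X₃ B 2)) : Subsingleton (Ext S.X₁ B 1) :=
  subsingleton_of_forall_eq 0 fun z => by
    obtain ⟨x₃, hx₃⟩ := Ext.contravariant_sequence_exact₁ hS B z rfl (Subsingleton.elim _ _)
    rw [← hx₃, Subsingleton.elim x₃ 0, Ext.comp_zero]

namespace IsCotorsionPair

variable {Y X : Set C}

lemma mem_left_of_projective (h : IsCotorsionPair.{w} Y X) {A : C} (hA : Projective A) :
    A ∈ Y :=
  (h.mem_left_iff A).2 fun B _ => projective_iff_subsingleton_ext_one.1 hA (Y := B)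

lemma mem_right_of_injective (h : IsCotorsionPair.{w} Y X) {B : C} (hB : Injective B) :
    B ∈ X :=
  (h.mem_right_iff B).2 fun A _ => injective_iff_subsingleton_ext_one.1 hB (Y := A)

end IsCotorsionPair

lemma projective_of_mem_inter {F G L : Set C} (hFG : IsCotorsionPair.{w} F G)
    (hGLc : Complete G L) (hGLh : Hereditary.{w} G L) {A : C} (hAF : A ∈ F) (hAG : A ∈ G) :
    Projective A := by
  refine projective_iff_subsingleton_ext_one.{w}.2 fun K => ?_
  obtain ⟨⟨L₀, hL₀, G₀, hG₀, _, _, _, hS⟩, -⟩ := hGLc K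
  exact subsingleton_ext_one_X₃_of_shortExact hS ((hFG.mem_left_iff A).1 hAF G₀ hG₀)
    (hGLh A hAG L₀ hL₀ 2 two_pos)

lemma injective_of_mem_inter {F G L : Set C} (hGL : IsCotorsionPair.{w} G L)
    (hFGc : Complete F G) (hFGh : Hereditary.{w} F G) {B : C} (hBG : B ∈ G) (hBL : B ∈ L) :
    Injective B := by
  refine injective_iff_subsingleton_ext_one.{w}.2 fun M => ?_
  obtain ⟨-, G₀, hG₀, F₀, hF₀, _, _, _, hS⟩ := hFGc M
  exact subsingleton_ext_one_X₁_of_shortExact hS ((hGL.mem_right_iff B).1 hBL G₀ hG₀)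
    (hFGh F₀ hF₀ B hBG 2 two_pos)

end CotorsionTriplet

/-- For a complete hereditary cotorsion triplet `(F, G, L)`, `F ∩ G` is the class
of projective objects and `G ∩ L` is the class of injective objects. -/
theorem inter_eq_proj_inj_of_triplet
    {C : Type u} [Category.{v} C] [Abelian C] [HasExt.{w} C]
    (F G L : Set C)
    (hFG : IsCotorsionPair.{w} F G) (hGL : IsCotorsionPair.{w} G L)
    (hFGc : Complete F G) (hGLc : Complete G L)
    (hFGh : Hereditary.{w} F G) (hGLh : Hereditary.{w} G L) :
    F ∩ G = {A : C | Projective A} ∧ G ∩ L = {A : C | Injective A} := by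
  exact ⟨Set.ext fun A => ⟨fun ⟨hAF, hAG⟩ => projective_of_mem_inter hFG hGLc hGLh hAF hAG,
      fun hA => ⟨hFG.mem_left_of_projective hA, hGL.mem_left_of_projective hA⟩⟩,
    Set.ext fun B => ⟨fun ⟨hBG, hBL⟩ => injective_of_mem_inter hGL hFGc hFGh hBG hBL,
      fun hB => ⟨hFG.mem_right_of_injective hB, hGL.mem_right_of_injective hB⟩⟩⟩

end Paper
end
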